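/- Let p be a prime, let B and C be commutative rings in which p is a non-zero-divisor, let δ be a p-derivation on B with associated Frobenius lift ψ (ψ(x) = x^p + p·δ(x)), let Δ be a p-derivation on C with associated Frobenius lift f (f(y) = y^p + p·Δ(y)), and let ι : B → C be a ring homomorphism such that f(ι(ψ^{m+1}(a))) = ι(ψ^{m+2}(a)) for all a ∈ B, where m ≥ 0 is a fixed integer. Let b ∈ B satisfy ι(δ^j(b)) = 0 for all 0 ≤ j ≤ m. Then for every n ≥ 0, the ideal of C generated by ι(δ^{m+1}(b)), Δ(ι(δ^{m+1}(b))), …, Δ^n(ι(δ^{m+1}(b))) equals the ideal of C generated by ι(δ^{m+1}(b)), ι(δ^{m+2}(b)), …, ι(δ^{m+n+1}(b)). -/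

import Mathlib

open MvPolynomial

/-- A `p`-derivation on a commutative ring `B`, relative to the polynomial
`Cp ∈ ℤ[X,Y]` satisfying `p·Cp = X^p + Y^p - (X+Y)^p`. -/
def IsPDeriv (p : ℕ) {B : Type*} [CommRing B] (Cp : MvPolynomial (Fin 2) ℤ)
    (δ : B → B) : Prop :=
  δ 1 = 0 ∧
  (∀ x y : B, δ (x + y) = δ x + δ y + MvPolynomial.aeval ![x, y] Cp) ∧
  (∀ x y : B, δ (x * y) = x ^ p * δ y + y ^ p * δ x + (p : B) * δ x * δ y)

/-!
The defect `D x = ι (δ x) - Δ (ι x)` satisfies `p * D x = ι (ψ x) - f (ι x)`. As `p` is a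
non-zero-divisor in `C`, `D` is additive, `D (p x) = p D x`, `D (x ^ p) ∈ p D x C`, and `D`
vanishes on the image of `ψ^{m+1}`. Expanding `ψ^{k+1} a = ψ^k(a)^p + p ψ^k(δ a)` shows
`D (ψ^k a) ≡ p^k D (δ^k a) mod p^k I` as soon as `D` vanishes modulo `I` on
`a, δ a, …, δ^{k-1} a`. For `k = m + 1` the left side is `0`, so cancelling `p^{m+1}` propagates
the vanishing of `ι (δ^j b)` for `j ≤ m` to `Δ c_i ≡ c_{i+1} mod (c_0, …, c_i)`, where
`c_i = ι (δ^{m+1+i} b)`. A `p`-derivation maps `(c_0, …, c_{i-1})` into any ideal containing it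
and the `Δ c_j`, hence `Δ^i c_0 ≡ c_i mod (c_0, …, c_{i-1})`: the two families of generators
differ by a unitriangular change.
-/

theorem X_one_dvd_of_natCast_mul_eq {p : ℕ} (hp : p ≠ 0) {Cp : MvPolynomial (Fin 2) ℤ}
    (hCp : (p : MvPolynomial (Fin 2) ℤ) * Cp = X 0 ^ p + X 1 ^ p - (X 0 + X 1) ^ p) :
    X 1 ∣ Cp := by
  have hdvd : X 1 ∣ (p : MvPolynomial (Fin 2) ℤ) * Cp := by
    have h := sub_dvd_pow_sub_pow (X 0 + X 1 : MvPolynomial (Fin 2) ℤ) (X 0) p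
    rw [add_sub_cancel_left] at h
    rw [hCp, show X 0 ^ p + X 1 ^ p - (X 0 + X 1) ^ p
      = X 1 ^ p - ((X 0 + X 1) ^ p - X 0 ^ p : MvPolynomial (Fin 2) ℤ) by ring]
    exact dvd_sub (dvd_pow_self _ hp) h
  refine (X_prime.dvd_or_dvd hdvd).resolve_left ?_
  rintro ⟨q, hq⟩
  simpa [hp] using congrArg constantCoeff hq

theorem dvd_aeval_of_X_one_dvd {P : MvPolynomial (Fin 2) ℤ} (h : X 1 ∣ P)
    {R : Type*} [CommRing R] (x y : R) : y ∣ aeval ![x, y] P := by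
  simpa using map_dvd (aeval ![x, y]) h

theorem exists_pow_sub_pow_eq_natCast_sq_mul {R : Type*} [CommRing R] {n : ℕ} {u v d : R}
    (h : u - v = n * d) : ∃ V, u ^ n - v ^ n = n ^ 2 * d * V := by
  obtain ⟨V, hV⟩ := dvd_geom_sum₂_self (h ▸ dvd_mul_right (n : R) d)
  exact ⟨V, by rw [← geom_sum₂_mul, hV, h]; ring⟩

theorem Ideal.span_image_Iio_eq_of_sub_mem {R : Type*} [CommRing R] {c d : ℕ → R}
    (h : ∀ k, d k - c k ∈ Ideal.span (c '' Set.Iio k)) (n : ℕ) :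
    Ideal.span (d '' Set.Iio n) = Ideal.span (c '' Set.Iio n) := by
  induction n with
  | zero => simp
  | succ n ih =>
    rw [Set.Iio_add_one_eq_Iic, ← Set.Iio_insert, Set.image_insert_eq, Set.image_insert_eq,
      Ideal.span_insert, Ideal.span_insert, ih]
    apply le_antisymm <;> refine sup_le ?_ le_sup_right <;> rw [Ideal.span_singleton_le_iff_mem]
    · simpa using add_mem (Ideal.mem_sup_right (h n))
        (Ideal.mem_sup_left (Ideal.mem_span_singleton_self (c n)))
    · simpa using sub_mem (Ideal.mem_sup_left (Ideal.mem_span_singleton_self (d n)))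
        (Ideal.mem_sup_right (h n))

namespace IsPDeriv

variable {p : ℕ} {R : Type*} [CommRing R] {Cp : MvPolynomial (Fin 2) ℤ} {δ : R → R}

theorem map_zero (hδ : IsPDeriv p Cp δ) (hX : X 1 ∣ Cp) : δ 0 = 0 := by
  have h := hδ.2.1 0 0
  rw [add_zero, zero_dvd_iff.mp (dvd_aeval_of_X_one_dvd hX 0 0)] at h
  linear_combination -h

theorem map_add_sub_map_mem (hδ : IsPDeriv p Cp δ) (hX : X 1 ∣ Cp) {J : Ideal R} (x : R)
    {e : R} (he : e ∈ J) (hδe : δ e ∈ J) : δ (x + e) - δ x ∈ J := by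
  rw [hδ.2.1, add_assoc, add_sub_cancel_left]
  exact J.add_mem hδe (J.mem_of_dvd (dvd_aeval_of_X_one_dvd hX x e) he)

theorem map_mem_of_mem_span (hδ : IsPDeriv p Cp δ) (hp : p ≠ 0) (hX : X 1 ∣ Cp) {s : Set R}
    {J : Ideal R} (hsJ : Ideal.span s ≤ J) (hs : ∀ x ∈ s, δ x ∈ J) {x : R}
    (hx : x ∈ Ideal.span s) : δ x ∈ J := by
  induction hx using Submodule.span_induction with
  | mem x hx => exact hs x hx
  | zero => rw [hδ.map_zero hX]; exact J.zero_mem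
  | add x y _ hy hδx hδy =>
    simpa using J.add_mem hδx (hδ.map_add_sub_map_mem hX x (hsJ hy) hδy)
  | smul r x hx hδx =>
    rw [smul_eq_mul, hδ.2.2]
    exact J.add_mem (J.add_mem (J.mul_mem_left _ hδx)
      (J.mul_mem_right _ (J.pow_mem_of_mem (hsJ hx) p (Nat.pos_of_ne_zero hp))))
      (J.mul_mem_left _ hδx)

theorem span_image_iterate_eq (hδ : IsPDeriv p Cp δ) (hp : p ≠ 0) (hX : X 1 ∣ Cp) (c : ℕ → R)
    (hc : ∀ k, δ (c k) - c (k + 1) ∈ Ideal.span (c '' Set.Iio (k + 1))) (n : ℕ) :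
    Ideal.span ((fun k => δ^[k] (c 0)) '' Set.Iio n) = Ideal.span (c '' Set.Iio n) := by
  set J : ℕ → Ideal R := fun n => Ideal.span (c '' Set.Iio n)
  have hJ : Monotone J := fun _ _ h => Ideal.span_mono (Set.image_mono (Set.Iio_subset_Iio h))
  have hδJ : ∀ n, ∀ x ∈ J n, δ x ∈ J (n + 1) := by
    intro n x hx
    refine hδ.map_mem_of_mem_span hp hX (hJ n.le_succ) ?_ hx
    rintro _ ⟨j, hj, rfl⟩
    have hj : j < n := hj
    have hcj : c (j + 1) ∈ J (n + 1) :=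
      Ideal.subset_span ⟨j + 1, Set.mem_Iio.mpr (by omega), rfl⟩
    simpa using add_mem (hJ (by omega : j + 1 ≤ n + 1) (hc j)) hcj
  have hT : ∀ k, δ^[k] (c 0) - c k ∈ J k := by
    intro k
    induction k with
    | zero => simp [J]
    | succ k ih =>
      have h := hδ.map_add_sub_map_mem hX (c k) (hJ k.le_succ ih) (hδJ k _ ih)
      rw [add_sub_cancel] at h
      rw [Function.iterate_succ_apply']
      simpa using add_mem h (hc k)
  exact Ideal.span_image_Iio_eq_of_sub_mem hT n

def frobeniusLift (hδ : IsPDeriv p Cp δ)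
    (hCp : (p : MvPolynomial (Fin 2) ℤ) * Cp = X 0 ^ p + X 1 ^ p - (X 0 + X 1) ^ p) : R →+* R :=
  RingHom.mk'
    { toFun := fun x => x ^ p + p * δ x
      map_one' := by simp [hδ.1]
      map_mul' := fun x y => by simp only [hδ.2.2]; ring }
    fun x y => by
      have h := congrArg (aeval ![x, y]) hCp
      simp only [map_mul, map_natCast, map_sub, map_add, map_pow, aeval_X, Matrix.cons_val_zero,
        Matrix.cons_val_one] at h
      simp only [MonoidHom.coe_mk, OneHom.coe_mk, hδ.2.1]
      linear_combination h

end IsPDeriv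

def pDerivDefect {B C : Type*} [CommRing B] [CommRing C] (ι : B →+* C) (δ : B → B)
    (Δ : C → C) (x : B) : C :=
  ι (δ x) - Δ (ι x)

section Defect

variable {p : ℕ} {B C : Type*} [CommRing B] [CommRing C] {ι : B →+* C} {δ : B → B} {Δ : C → C}
  {ψ : B →+* B} {f : C →+* C}

theorem natCast_mul_pDerivDefect (hψ : ∀ x, ψ x = x ^ p + p * δ x)
    (hf : ∀ y, f y = y ^ p + p * Δ y) (x : B) :
    (p : C) * pDerivDefect ι δ Δ x = ι (ψ x) - f (ι x) := by
  rw [pDerivDefect, hψ, hf, map_add, map_mul, map_pow, map_natCast]; ring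

theorem pDerivDefect_eq_zero (hψ : ∀ x, ψ x = x ^ p + p * δ x)
    (hf : ∀ y, f y = y ^ p + p * Δ y) (hpC : (p : C) ∈ nonZeroDivisors C) {x : B}
    (h : f (ι x) = ι (ψ x)) : pDerivDefect ι δ Δ x = 0 := by
  rw [← mul_cancel_left_mem_nonZeroDivisors hpC, natCast_mul_pDerivDefect hψ hf, h, sub_self,
    mul_zero]

theorem pDerivDefect_add (hψ : ∀ x, ψ x = x ^ p + p * δ x)
    (hf : ∀ y, f y = y ^ p + p * Δ y) (hpC : (p : C) ∈ nonZeroDivisors C) (x y : B) :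
    pDerivDefect ι δ Δ (x + y) = pDerivDefect ι δ Δ x + pDerivDefect ι δ Δ y := by
  rw [← mul_cancel_left_mem_nonZeroDivisors hpC, mul_add, natCast_mul_pDerivDefect hψ hf,
    natCast_mul_pDerivDefect hψ hf, natCast_mul_pDerivDefect hψ hf]
  simp only [map_add]
  ring

theorem pDerivDefect_natCast_mul (hψ : ∀ x, ψ x = x ^ p + p * δ x)
    (hf : ∀ y, f y = y ^ p + p * Δ y) (hpC : (p : C) ∈ nonZeroDivisors C) (x : B) :
    pDerivDefect ι δ Δ (p * x) = p * pDerivDefect ι δ Δ x := by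
  rw [← mul_cancel_left_mem_nonZeroDivisors hpC, natCast_mul_pDerivDefect hψ hf,
    natCast_mul_pDerivDefect hψ hf]
  simp only [map_mul, map_natCast]
  ring

theorem exists_pDerivDefect_pow_eq (hψ : ∀ x, ψ x = x ^ p + p * δ x)
    (hf : ∀ y, f y = y ^ p + p * Δ y) (hpC : (p : C) ∈ nonZeroDivisors C) (x : B) :
    ∃ V, pDerivDefect ι δ Δ (x ^ p) = p * pDerivDefect ι δ Δ x * V := by
  obtain ⟨V, hV⟩ :=
    exists_pow_sub_pow_eq_natCast_sq_mul (natCast_mul_pDerivDefect (ι := ι) hψ hf x).symm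
  refine ⟨V, (mul_cancel_left_mem_nonZeroDivisors hpC).mp ?_⟩
  rw [natCast_mul_pDerivDefect hψ hf]
  simp only [map_pow]
  rw [hV]
  ring

theorem exists_pDerivDefect_iterate_sub_eq (hψ : ∀ x, ψ x = x ^ p + p * δ x)
    (hf : ∀ y, f y = y ^ p + p * Δ y) (hpC : (p : C) ∈ nonZeroDivisors C) (I : Ideal C)
    (k : ℕ) (a : B) (ha : ∀ j < k, pDerivDefect ι δ Δ (δ^[j] a) ∈ I) :
    ∃ u ∈ I, pDerivDefect ι δ Δ (ψ^[k] a) - p ^ k * pDerivDefect ι δ Δ (δ^[k] a)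
      = p ^ k * u := by
  induction k generalizing a with
  | zero => exact ⟨0, I.zero_mem, by simp⟩
  | succ k ih =>
    obtain ⟨u₁, hu₁, h₁⟩ := ih a fun j hj => ha j (by omega)
    obtain ⟨u₂, hu₂, h₂⟩ := ih (δ a) fun j hj => by
      rw [← Function.iterate_succ_apply]; exact ha (j + 1) (by omega)
    obtain ⟨V, hV⟩ := exists_pDerivDefect_pow_eq hψ hf hpC (ψ^[k] a)
    have hψ_succ : ψ^[k + 1] a = (ψ^[k] a) ^ p + p * ψ^[k] (δ a) := by
      rw [Function.iterate_succ_apply, hψ, ← RingHom.coe_pow, map_add, map_mul, map_pow,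
        map_natCast]
    refine ⟨(u₁ + pDerivDefect ι δ Δ (δ^[k] a)) * V + u₂,
      I.add_mem (I.mul_mem_right _ (I.add_mem hu₁ (ha k k.lt_succ_self))) hu₂, ?_⟩
    rw [hψ_succ, pDerivDefect_add hψ hf hpC, pDerivDefect_natCast_mul hψ hf hpC, hV,
      Function.iterate_succ_apply δ]
    linear_combination (p * V) * h₁ + p * h₂

theorem pDerivDefect_iterate_mem (hψ : ∀ x, ψ x = x ^ p + p * δ x)
    (hf : ∀ y, f y = y ^ p + p * Δ y) (hpC : (p : C) ∈ nonZeroDivisors C) {k : ℕ}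
    (hk : ∀ a, pDerivDefect ι δ Δ (ψ^[k] a) = 0) {I : Ideal C} {a : B}
    (ha : ∀ j < k, pDerivDefect ι δ Δ (δ^[j] a) ∈ I) : pDerivDefect ι δ Δ (δ^[k] a) ∈ I := by
  obtain ⟨u, hu, h⟩ := exists_pDerivDefect_iterate_sub_eq hψ hf hpC I k a ha
  rw [hk, zero_sub, ← mul_neg, mul_cancel_left_mem_nonZeroDivisors (pow_mem hpC k)] at h
  simpa [neg_eq_iff_eq_neg.mp h] using I.neg_mem hu

theorem map_iterate_sub_iterate_succ_mem_span (hψ : ∀ x, ψ x = x ^ p + p * δ x)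
    (hf : ∀ y, f y = y ^ p + p * Δ y) (hpC : (p : C) ∈ nonZeroDivisors C) (hΔ0 : Δ 0 = 0)
    {m : ℕ} (hD : ∀ a, pDerivDefect ι δ Δ (ψ^[m + 1] a) = 0) {b : B}
    (hb : ∀ j ≤ m, ι (δ^[j] b) = 0) (i : ℕ) :
    Δ (ι (δ^[m + 1 + i] b)) - ι (δ^[m + 1 + (i + 1)] b)
      ∈ Ideal.span ((fun j => ι (δ^[m + 1 + j] b)) '' Set.Iio (i + 1)) := by
  set J : ℕ → Ideal C := fun n => Ideal.span ((fun j => ι (δ^[m + 1 + j] b)) '' Set.Iio n)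
  have hJ : Monotone J := fun _ _ h => Ideal.span_mono (Set.image_mono (Set.Iio_subset_Iio h))
  have hDδ : ∀ l, pDerivDefect ι δ Δ (δ^[l] b) = ι (δ^[l + 1] b) - Δ (ι (δ^[l] b)) := fun l => by
    rw [pDerivDefect, Function.iterate_succ_apply']
  have hbase : ∀ l ≤ m, pDerivDefect ι δ Δ (δ^[l] b) ∈ J 1 := by
    intro l hl
    rcases hl.lt_or_eq with hl | rfl
    · rw [hDδ, hb _ hl, hb _ hl.le, hΔ0, sub_zero]; exact (J 1).zero_mem
    · rw [hDδ, hb _ le_rfl, hΔ0, sub_zero]; exact Ideal.subset_span ⟨0, by simp, rfl⟩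
  have hstep : ∀ i, (∀ l ≤ m + i, pDerivDefect ι δ Δ (δ^[l] b) ∈ J (i + 1)) →
      pDerivDefect ι δ Δ (δ^[m + 1 + i] b) ∈ J (i + 1) := by
    intro i h
    rw [Function.iterate_add_apply]
    refine pDerivDefect_iterate_mem hψ hf hpC hD fun j hj => ?_
    rw [← Function.iterate_add_apply]
    exact h _ (by omega)
  have key : ∀ i, ∀ l ≤ m + i, pDerivDefect ι δ Δ (δ^[l] b) ∈ J (i + 1) := by
    intro i
    induction i with
    | zero => exact hbase
    | succ i ih =>
      intro l hl
      refine hJ (by omega : i + 1 ≤ i + 1 + 1) ?_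
      rcases (show l ≤ m + i ∨ l = m + 1 + i by omega) with hl | rfl
      · exact ih l hl
      · exact hstep i ih
  have := neg_mem (hstep i (key i))
  rwa [hDδ, neg_sub] at this

end Defect

theorem span_iterate_Delta_eq_span_iterate_delta_general
    (p : ℕ) (hp : p.Prime) {B C' : Type*} [CommRing B] [CommRing C']
    (hpC : (p : C') ∈ nonZeroDivisors C')
    (Cp : MvPolynomial (Fin 2) ℤ)
    (hCp : (p : MvPolynomial (Fin 2) ℤ) * Cp =
      X 0 ^ p + X 1 ^ p - (X 0 + X 1) ^ p)
    (δ : B → B) (hδ : IsPDeriv p Cp δ)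
    (ψ : B → B) (hψ : ∀ x : B, ψ x = x ^ p + (p : B) * δ x)
    (Δ : C' → C') (hΔ : IsPDeriv p Cp Δ)
    (f : C' → C') (hf : ∀ y : C', f y = y ^ p + (p : C') * Δ y)
    (ι : B →+* C') (m : ℕ)
    (hcomm : ∀ a : B, f (ι (ψ^[m + 1] a)) = ι (ψ^[m + 2] a))
    (b : B) (hb : ∀ j ≤ m, ι (δ^[j] b) = 0) :
    ∀ n : ℕ,
      Ideal.span (Set.range fun i : Fin (n + 1) =>
        Δ^[(i : ℕ)] (ι (δ^[m + 1] b))) =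
      Ideal.span (Set.range fun i : Fin (n + 1) =>
        ι (δ^[m + 1 + (i : ℕ)] b)) := by
  obtain rfl : ψ = hδ.frobeniusLift hCp := funext hψ
  obtain rfl : f = hΔ.frobeniusLift hCp := funext hf
  have hX := X_one_dvd_of_natCast_mul_eq hp.ne_zero hCp
  have hD : ∀ a, pDerivDefect ι δ Δ ((hδ.frobeniusLift hCp)^[m + 1] a) = 0 := fun a =>
    pDerivDefect_eq_zero hψ hf hpC
      ((hcomm a).trans (congrArg ι (Function.iterate_succ_apply' _ _ _)))
  intro n
  have h := hΔ.span_image_iterate_eq hp.ne_zero hX (fun j => ι (δ^[m + 1 + j] b))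
    (map_iterate_sub_iterate_succ_mem_span hψ hf hpC
      (hΔ.map_zero hX) hD hb) (n + 1)
  rw [← Fin.range_val, ← Set.range_comp, ← Set.range_comp] at h
  exact h

/-- The ideal generated by `ι(δ^{m+1}(b)), Δ(ι(δ^{m+1}(b))), …, Δ^n(ι(δ^{m+1}(b)))`
equals the ideal generated by `ι(δ^{m+1}(b)), ι(δ^{m+2}(b)), …, ι(δ^{m+n+1}(b))`. -/
theorem span_iterate_Delta_eq_span_iterate_delta
    (p : ℕ) (hp : p.Prime) {B C' : Type*} [CommRing B] [CommRing C']
    (hpB : (p : B) ∈ nonZeroDivisors B) (hpC : (p : C') ∈ nonZeroDivisors C')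
    (Cp : MvPolynomial (Fin 2) ℤ)
    (hCp : (p : MvPolynomial (Fin 2) ℤ) * Cp =
      X 0 ^ p + X 1 ^ p - (X 0 + X 1) ^ p)
    (δ : B → B) (hδ : IsPDeriv p Cp δ)
    (ψ : B → B) (hψ : ∀ x : B, ψ x = x ^ p + (p : B) * δ x)
    (Δ : C' → C') (hΔ : IsPDeriv p Cp Δ)
    (f : C' → C') (hf : ∀ y : C', f y = y ^ p + (p : C') * Δ y)
    (ι : B →+* C') (m : ℕ)
    (hcomm : ∀ a : B, f (ι (ψ^[m + 1] a)) = ι (ψ^[m + 2] a))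
    (b : B) (hb : ∀ j ≤ m, ι (δ^[j] b) = 0) :
    ∀ n : ℕ,
      Ideal.span (Set.range fun i : Fin (n + 1) =>
        Δ^[(i : ℕ)] (ι (δ^[m + 1] b))) =
      Ideal.span (Set.range fun i : Fin (n + 1) =>
        ι (δ^[m + 1 + (i : ℕ)] b)) :=
  span_iterate_Delta_eq_span_iterate_delta_general p hp hpC Cp hCp δ hδ ψ hψ Δ hΔ f hf ι m hcomm b
    hb
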